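/- Two-particle current distribution formula: for $N=2$, initial positions $y_1=-1,y_2=0$, and rates $v_1,v_2>0$, the probability $Q_2(x,t)$ that both particles lie at or beyond sites $x$ and $x+1$ respectively at time $t$ equals $e^{-t(v_1+v_2)}(v_1v_2)^{x+1}\det\begin{pmatrix}F_{1,2}(x+1,t)&F_{1,3}(x+2,t)\\F_{2,2}(x,t)&F_{2,3}(x+1,t)\end{pmatrix}$, and this expression equals $e^{-t(v_1+v_2)}(v_1v_2)^{x+1}\det\begin{pmatrix}F_{1,3}(x+1,t)&F_{1,3}(x+2,t)\\F_{1,3}(x,t)&F_{1,3}(x+1,t)\end{pmatrix}$. -/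

import Mathlib

open Finset

/-- The contour-integral function `F_{k,l}(x,t)` of Rákos–Schütz:
`F_{k,l}(x,t) = (2πi)⁻¹ ∮ e^{t/z} z^{x-1} ∏_{i=1}^{l-1}(1 - v_i z)⁻¹ ∏_{i=1}^{k-1}(1 - v_i z) dz`
along a circle of radius `ε` around the origin.  The rates are `v 1, v 2, …`. -/
noncomputable def F (v : ℕ → ℝ) (ε : ℝ) (k l : ℕ) (x : ℤ) (t : ℝ) : ℂ :=
  (2 * Real.pi * Complex.I)⁻¹ *
    (∮ z in C(0, ε), Complex.exp ((t : ℂ) / z) * z ^ (x - 1) *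
      (∏ i ∈ range (l - 1), (1 - (v (i + 1) : ℂ) * z)⁻¹) *
      ∏ i ∈ range (k - 1), (1 - (v (i + 1) : ℂ) * z))

/-- The two-particle conditional probability from initial positions `y₁ < y₂`:
`P(x₁,x₂|y₁,y₂;t) = e^{-t(v₁+v₂)} v₁^{x₁-y₁} v₂^{x₂-y₂}
  det [F₁₁(x₁-y₁) F₁₂(x₂-y₁); F₂₁(x₁-y₂) F₂₂(x₂-y₂)]`. -/
noncomputable def P2 (v : ℕ → ℝ) (ε : ℝ) (y₁ y₂ x₁ x₂ : ℤ) (t : ℝ) : ℂ :=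
  Complex.exp (-(t * (v 1 + v 2) : ℝ)) * (v 1 : ℂ) ^ (x₁ - y₁) * (v 2 : ℂ) ^ (x₂ - y₂) *
    Matrix.det !![F v ε 1 1 (x₁ - y₁) t, F v ε 1 2 (x₂ - y₁) t;
                  F v ε 2 1 (x₁ - y₂) t, F v ε 2 2 (x₂ - y₂) t]

/-!
Read `F_{k,l}(x)` as the coefficient of `z ^ (-x)` in `e^{t/z} ∏ (1 - v_i z)^{∓1}` on the circle
`|z| = ε`. Multiplying the symbol by `1 - v z` is then the difference operator
`f ↦ f(x) - v f(x + 1)`, and dividing by it is the geometric sum `f ↦ ∑ₙ vⁿ f(x + n)`; these give the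
recursions between the `F_{k,l}`. Summing `P₂(x₁, x₂)` over `x₂ > x₁` is such a geometric sum, and
after rewriting every entry through `F_{1,3}` it equals `Q₂(x₁) - Q₂(x₁ + 1)`. The Cauchy estimate
`‖F_{k,l}(x)‖ ≤ C εˣ` together with `v_i ε < 1` gives absolute convergence of the double sum and
`Q₂(x₁) → 0`, so the sum over `x ≤ x₁ < x₂` telescopes to `Q₂(x)`.
-/

open Metric Filter Topology Complex

lemma norm_mul_sub_mul_le {R : Type*} [SeminormedRing R] {a b c d : R} {A B C D : ℝ}
    (ha : ‖a‖ ≤ A) (hb : ‖b‖ ≤ B) (hc : ‖c‖ ≤ C) (hd : ‖d‖ ≤ D) :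
    ‖a * b - c * d‖ ≤ A * B + C * D :=
  (norm_sub_le _ _).trans <| add_le_add
    ((norm_mul_le _ _).trans (mul_le_mul ha hb (norm_nonneg _) ((norm_nonneg _).trans ha)))
    ((norm_mul_le _ _).trans (mul_le_mul hc hd (norm_nonneg _) ((norm_nonneg _).trans hc)))

lemma hasSum_of_fiberwise_telescoping {E : Type*} [AddCommGroup E] [TopologicalSpace E]
    [IsTopologicalAddGroup E] [T2Space E] {f : ℕ × ℕ → E} {g : ℕ → E} (hf : Summable f)
    (hfib : ∀ m, HasSum (fun n => f (m, n)) (g m - g (m + 1))) (hg : Tendsto g atTop (𝓝 0)) :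
    HasSum f (g 0) := by
  have htel : Tendsto (fun N => ∑ m ∈ range N, (g m - g (m + 1))) atTop (𝓝 (g 0)) := by
    simpa only [sum_range_sub', sub_zero] using tendsto_const_nhds.sub hg
  convert hf.hasSum
  exact tendsto_nhds_unique htel (hf.hasSum.prod_fiberwise hfib).tendsto_sum_nat

/-- `laurentCoeff ε h x` is the coefficient of `z ^ (-x)` in the Laurent expansion of `h` on an
annulus containing the circle of radius `ε`. -/
noncomputable def laurentCoeff (ε : ℝ) (h : ℂ → ℂ) (x : ℤ) : ℂ :=
  (2 * Real.pi * I)⁻¹ * ∮ z in C(0, ε), z ^ (x - 1) * h z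

section laurentCoeff

variable {ε : ℝ} {h : ℂ → ℂ}

lemma ne_zero_of_mem_sphere_zero (hε : 0 < ε) {z : ℂ} (hz : z ∈ sphere (0 : ℂ) ε) : z ≠ 0 :=
  ne_zero_of_mem_sphere hε.ne' ⟨z, hz⟩

lemma one_sub_mul_ne_zero_of_mem_sphere {w : ℂ} (hw : ‖w‖ * ε < 1) {z : ℂ}
    (hz : z ∈ sphere (0 : ℂ) ε) : 1 - w * z ≠ 0 := by
  rw [sub_ne_zero, ne_comm]
  intro h
  have hnorm : ‖w * z‖ = ‖w‖ * ε := by rw [norm_mul, mem_sphere_zero_iff_norm.1 hz]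
  rw [h, norm_one] at hnorm
  linarith

lemma continuousOn_zpow_mul (hε : 0 < ε) (hh : ContinuousOn h (sphere 0 ε)) (y : ℤ) :
    ContinuousOn (fun z => z ^ y * h z) (sphere 0 ε) :=
  (continuousOn_id.zpow₀ y fun _ hz => Or.inl (ne_zero_of_mem_sphere_zero hε hz)).mul hh

lemma laurentCoeff_congr (hε : 0 ≤ ε) {g : ℂ → ℂ} (hhg : Set.EqOn h g (sphere 0 ε)) :
    laurentCoeff ε h = laurentCoeff ε g := by
  ext x
  rw [laurentCoeff, laurentCoeff,
    circleIntegral.integral_congr hε fun z hz => by rw [hhg hz]]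

lemma laurentCoeff_one_sub_mul (hε : 0 < ε) (hh : ContinuousOn h (sphere 0 ε)) (w : ℂ) (x : ℤ) :
    laurentCoeff ε (fun z => (1 - w * z) * h z) x =
      laurentCoeff ε h x - w * laurentCoeff ε h (x + 1) := by
  have hsplit : Set.EqOn (fun z => z ^ (x - 1) * ((1 - w * z) * h z))
      (fun z => z ^ (x - 1) * h z - w * (z ^ (x + 1 - 1) * h z)) (sphere 0 ε) := fun z hz => by
    simp only [add_sub_cancel_right, zpow_sub_one₀ (ne_zero_of_mem_sphere_zero hε hz)]
    field_simp [ne_zero_of_mem_sphere_zero hε hz]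
  have hw : CircleIntegrable (fun z => w * (z ^ (x + 1 - 1) * h z)) 0 ε :=
    (continuousOn_const.mul (continuousOn_zpow_mul hε hh _)).circleIntegrable hε.le
  rw [laurentCoeff, circleIntegral.integral_congr hε.le hsplit, circleIntegral.integral_sub
    ((continuousOn_zpow_mul hε hh _).circleIntegrable hε.le) hw,
    circleIntegral.integral_const_mul, laurentCoeff, laurentCoeff]
  ring

lemma norm_laurentCoeff_le (hε : 0 < ε) {M : ℝ} (hM : ∀ z ∈ sphere (0 : ℂ) ε, ‖h z‖ ≤ M)
    (x : ℤ) : ‖laurentCoeff ε h x‖ ≤ M * ε ^ x := by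
  rw [laurentCoeff, ← smul_eq_mul]
  refine (circleIntegral.norm_two_pi_i_inv_smul_integral_le_of_norm_le_const
    (C := M * ε ^ (x - 1)) hε.le fun z hz => ?_).trans_eq (by rw [zpow_sub_one₀ hε.ne']; field_simp)
  rw [norm_mul, norm_zpow, mem_sphere_zero_iff_norm.1 hz, mul_comm]
  exact mul_le_mul_of_nonneg_right (hM z hz) (by positivity)

lemma exists_norm_laurentCoeff_le (hε : 0 < ε) (hh : ContinuousOn h (sphere 0 ε)) :
    ∃ C, ∀ x, ‖laurentCoeff ε h x‖ ≤ C * ε ^ x :=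
  (isCompact_sphere 0 ε).exists_bound_of_continuousOn hh |>.imp
    fun _ hM => norm_laurentCoeff_le hε hM

lemma norm_pow_mul_laurentCoeff_le (hε : 0 < ε) {C : ℝ}
    (hC : ∀ y, ‖laurentCoeff ε h y‖ ≤ C * ε ^ y) (w : ℂ) (x : ℤ) (n : ℕ) :
    ‖w ^ n * laurentCoeff ε h (x + n)‖ ≤ C * ε ^ x * (‖w‖ * ε) ^ n := by
  calc ‖w ^ n * laurentCoeff ε h (x + n)‖ ≤ ‖w‖ ^ n * (C * ε ^ (x + n)) := by
        rw [norm_mul, norm_pow]; gcongr; exact hC _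
    _ = C * ε ^ x * (‖w‖ * ε) ^ n := by rw [zpow_add₀ hε.ne', zpow_natCast]; ring

lemma hasSum_laurentCoeff_geometric (hε : 0 < ε) (hh : ContinuousOn h (sphere 0 ε)) {w : ℂ}
    (hw : ‖w‖ * ε < 1) (x : ℤ) :
    HasSum (fun n : ℕ => w ^ n * laurentCoeff ε h (x + n))
      (laurentCoeff ε (fun z => (1 - w * z)⁻¹ * h z) x) := by
  set g : ℂ → ℂ := fun z => (1 - w * z)⁻¹ * h z
  have hne : ∀ z ∈ sphere (0 : ℂ) ε, 1 - w * z ≠ 0 := fun z hz =>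
    one_sub_mul_ne_zero_of_mem_sphere hw hz
  have hg : ContinuousOn g (sphere 0 ε) :=
    ((continuousOn_const.sub (continuousOn_const.mul continuousOn_id)).inv₀ hne).mul hh
  have hstep : ∀ y, laurentCoeff ε g y = laurentCoeff ε h y + w * laurentCoeff ε g (y + 1) := by
    intro y
    have hshift := laurentCoeff_one_sub_mul hε hg w y
    rw [laurentCoeff_congr hε.le (g := h)
      fun z hz => by simp [g, mul_inv_cancel_left₀ (hne z hz)]] at hshift
    linear_combination -hshift
  have hpartial : ∀ N : ℕ, ∑ n ∈ range N, w ^ n * laurentCoeff ε h (x + n) =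
      laurentCoeff ε g x - w ^ N * laurentCoeff ε g (x + N) := by
    intro N
    induction N with
    | zero => simp
    | succ N ih =>
      rw [sum_range_succ, ih, hstep (x + N)]
      push_cast
      ring_nf
  obtain ⟨C, hC⟩ := exists_norm_laurentCoeff_le hε hh
  obtain ⟨Cg, hCg⟩ := exists_norm_laurentCoeff_le hε hg
  have hsummable : Summable fun n : ℕ => w ^ n * laurentCoeff ε h (x + n) :=
    .of_norm_bounded ((summable_geometric_of_lt_one (by positivity) hw).mul_left _)
      (norm_pow_mul_laurentCoeff_le hε hC w x)
  have hgeom := (tendsto_pow_atTop_nhds_zero_of_lt_one (by positivity) hw).const_mul (Cg * ε ^ x)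
  rw [mul_zero] at hgeom
  have htail : Tendsto (fun N : ℕ => w ^ N * laurentCoeff ε g (x + N)) atTop (𝓝 0) :=
    squeeze_zero_norm (norm_pow_mul_laurentCoeff_le hε hCg w x) hgeom
  rw [hsummable.hasSum_iff_tendsto_nat]
  simp only [hpartial]
  simpa using tendsto_const_nhds.sub htail

end laurentCoeff

noncomputable def FKernel (v : ℕ → ℝ) (t : ℝ) (k l : ℕ) (z : ℂ) : ℂ :=
  exp (t / z) * (∏ i ∈ range (l - 1), (1 - (v (i + 1) : ℂ) * z)⁻¹) *
    ∏ i ∈ range (k - 1), (1 - (v (i + 1) : ℂ) * z)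

lemma norm_ofReal_mul_lt_one {r ε : ℝ} (h : |r| * ε < 1) : ‖(r : ℂ)‖ * ε < 1 := by
  rwa [norm_real, Real.norm_eq_abs]

section F

variable (v : ℕ → ℝ) {ε : ℝ} (t : ℝ)

lemma F_eq_laurentCoeff (k l : ℕ) (x : ℤ) : F v ε k l x t = laurentCoeff ε (FKernel v t k l) x := by
  rw [F, laurentCoeff]
  congr 2
  funext z
  rw [FKernel]
  ring

lemma FKernel_add_two_left (k l : ℕ) :
    FKernel v t (k + 2) l = fun z => (1 - (v (k + 1) : ℂ) * z) * FKernel v t (k + 1) l z := by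
  funext z
  simp only [FKernel, show k + 2 - 1 = k + 1 by omega, Nat.add_sub_cancel, prod_range_succ]
  ring

lemma FKernel_add_two_right (k l : ℕ) :
    FKernel v t k (l + 2) = fun z => (1 - (v (l + 1) : ℂ) * z)⁻¹ * FKernel v t k (l + 1) z := by
  funext z
  simp only [FKernel, show l + 2 - 1 = l + 1 by omega, Nat.add_sub_cancel, prod_range_succ]
  ring

variable {v} (hε : 0 < ε) (hvε : ∀ i, |v i| * ε < 1)
include hε hvε

lemma continuousOn_FKernel (k l : ℕ) : ContinuousOn (FKernel v t k l) (sphere 0 ε) := by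
  have hlin : ∀ i, ContinuousOn (fun z : ℂ => 1 - (v (i + 1) : ℂ) * z) (sphere 0 ε) := fun i =>
    continuousOn_const.sub (continuousOn_const.mul continuousOn_id)
  refine (((continuousOn_const.div continuousOn_id fun z hz =>
    ne_zero_of_mem_sphere_zero hε hz).cexp).mul
      (continuousOn_finsetProd _ fun i _ => (hlin i).inv₀ fun z hz =>
        one_sub_mul_ne_zero_of_mem_sphere (norm_ofReal_mul_lt_one (hvε _)) hz)).mul
      (continuousOn_finsetProd _ fun i _ => hlin i)

lemma F_add_two_left_eq_sub (k l : ℕ) (x : ℤ) :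
    F v ε (k + 2) l x t = F v ε (k + 1) l x t - v (k + 1) * F v ε (k + 1) l (x + 1) t := by
  simp only [F_eq_laurentCoeff, FKernel_add_two_left]
  exact laurentCoeff_one_sub_mul hε (continuousOn_FKernel t hε hvε _ _) _ x

lemma F_add_one_right_eq_sub (k l : ℕ) (x : ℤ) :
    F v ε k (l + 1) x t = F v ε k (l + 2) x t - v (l + 1) * F v ε k (l + 2) (x + 1) t := by
  simp only [F_eq_laurentCoeff]
  rw [← laurentCoeff_one_sub_mul hε (continuousOn_FKernel t hε hvε _ _)]
  refine congrFun (laurentCoeff_congr hε.le fun z hz => ?_) x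
  rw [FKernel_add_two_right, mul_inv_cancel_left₀
    (one_sub_mul_ne_zero_of_mem_sphere (norm_ofReal_mul_lt_one (hvε _)) hz)]

lemma hasSum_F_add_two_right (k l : ℕ) (x : ℤ) :
    HasSum (fun n : ℕ => (v (l + 1) : ℂ) ^ n * F v ε k (l + 1) (x + n) t) (F v ε k (l + 2) x t) := by
  simp only [F_eq_laurentCoeff, FKernel_add_two_right]
  exact hasSum_laurentCoeff_geometric hε (continuousOn_FKernel t hε hvε _ _)
    (norm_ofReal_mul_lt_one (hvε _)) x

lemma exists_norm_F_le (k l : ℕ) : ∃ C, ∀ x, ‖F v ε k l x t‖ ≤ C * ε ^ x := by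
  simpa only [F_eq_laurentCoeff] using
    exists_norm_laurentCoeff_le hε (continuousOn_FKernel t hε hvε k l)

end F

/-- The paper's `Q₂(x,t)` in its `F_{1,3}` form. -/
noncomputable def Q2 (v : ℕ → ℝ) (ε : ℝ) (x : ℤ) (t : ℝ) : ℂ :=
  Complex.exp (-(t * (v 1 + v 2) : ℝ)) * ((v 1 : ℂ) * (v 2 : ℂ)) ^ (x + 1) *
    Matrix.det !![F v ε 1 3 (x + 1) t, F v ε 1 3 (x + 2) t;
                  F v ε 1 3 x t, F v ε 1 3 (x + 1) t]

section TwoParticles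

variable {v : ℕ → ℝ} {ε : ℝ} (t : ℝ) (hε : 0 < ε) (hvε : ∀ i, |v i| * ε < 1)
include hε hvε

lemma F_one_one (y : ℤ) : F v ε 1 1 y t = F v ε 1 2 y t - v 1 * F v ε 1 2 (y + 1) t := by
  simpa using F_add_one_right_eq_sub t hε hvε 1 0 y

lemma F_one_two (y : ℤ) : F v ε 1 2 y t = F v ε 1 3 y t - v 2 * F v ε 1 3 (y + 1) t := by
  simpa using F_add_one_right_eq_sub t hε hvε 1 1 y

lemma F_two_one (y : ℤ) : F v ε 2 1 y t = F v ε 1 1 y t - v 1 * F v ε 1 1 (y + 1) t := by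
  simpa using F_add_two_left_eq_sub t hε hvε 0 1 y

lemma F_two_two (y : ℤ) : F v ε 2 2 y t = F v ε 1 1 y t := by
  rw [F_one_one t hε hvε]
  simpa using F_add_two_left_eq_sub t hε hvε 0 2 y

lemma F_two_three (y : ℤ) : F v ε 2 3 y t = F v ε 1 3 y t - v 1 * F v ε 1 3 (y + 1) t := by
  simpa using F_add_two_left_eq_sub t hε hvε 0 3 y

lemma det_F_eq_det_F_one_three (x : ℤ) :
    Matrix.det !![F v ε 1 2 (x + 1) t, F v ε 1 3 (x + 2) t; F v ε 2 2 x t, F v ε 2 3 (x + 1) t] =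
      Matrix.det !![F v ε 1 3 (x + 1) t, F v ε 1 3 (x + 2) t;
                    F v ε 1 3 x t, F v ε 1 3 (x + 1) t] := by
  simp only [Matrix.det_fin_two_of, F_two_two t hε hvε, F_one_one t hε hvε,
    F_one_two t hε hvε, F_two_three t hε hvε]
  ring_nf

lemma exists_norm_P2_le :
    ∃ K, ∀ X Y : ℤ, ‖P2 v ε (-1) 0 X Y t‖ ≤ K * (|v 1| * ε) ^ (X + 1) * (|v 2| * ε) ^ Y := by
  obtain ⟨C₁₁, h₁₁⟩ := exists_norm_F_le t hε hvε 1 1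
  obtain ⟨C₁₂, h₁₂⟩ := exists_norm_F_le t hε hvε 1 2
  obtain ⟨C₂₁, h₂₁⟩ := exists_norm_F_le t hε hvε 2 1
  obtain ⟨C₂₂, h₂₂⟩ := exists_norm_F_le t hε hvε 2 2
  refine ⟨‖Complex.exp (-(t * (v 1 + v 2) : ℝ))‖ * (C₁₁ * C₂₂ + C₁₂ * C₂₁), fun X Y => ?_⟩
  calc ‖P2 v ε (-1) 0 X Y t‖
      = ‖Complex.exp (-(t * (v 1 + v 2) : ℝ))‖ * (|v 1| ^ (X + 1) * |v 2| ^ Y) *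
          ‖F v ε 1 1 (X + 1) t * F v ε 2 2 Y t - F v ε 1 2 (Y + 1) t * F v ε 2 1 X t‖ := by
        simp only [P2, Matrix.det_fin_two_of, sub_neg_eq_add, sub_zero, norm_mul, norm_zpow,
          norm_real, Real.norm_eq_abs]
        ring
    _ ≤ ‖Complex.exp (-(t * (v 1 + v 2) : ℝ))‖ * (|v 1| ^ (X + 1) * |v 2| ^ Y) *
          (C₁₁ * ε ^ (X + 1) * (C₂₂ * ε ^ Y) + C₁₂ * ε ^ (Y + 1) * (C₂₁ * ε ^ X)) := by
        gcongr
        exact norm_mul_sub_mul_le (h₁₁ _) (h₂₂ _) (h₁₂ _) (h₂₁ _)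
    _ = _ := by
        rw [mul_zpow, mul_zpow, zpow_add_one₀ hε.ne', zpow_add_one₀ hε.ne']
        ring

lemma exists_norm_Q2_le :
    ∃ K, ∀ y : ℤ, ‖Q2 v ε y t‖ ≤ K * (|v 1| * ε * (|v 2| * ε)) ^ (y + 1) := by
  obtain ⟨C, hC⟩ := exists_norm_F_le t hε hvε 1 3
  refine ⟨‖Complex.exp (-(t * (v 1 + v 2) : ℝ))‖ * (C * C + C * C), fun y => ?_⟩
  calc ‖Q2 v ε y t‖
      = ‖Complex.exp (-(t * (v 1 + v 2) : ℝ))‖ * (|v 1| * |v 2|) ^ (y + 1) *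
          ‖F v ε 1 3 (y + 1) t * F v ε 1 3 (y + 1) t - F v ε 1 3 (y + 2) t * F v ε 1 3 y t‖ := by
        simp only [Q2, Matrix.det_fin_two_of, norm_mul, norm_zpow, norm_real, Real.norm_eq_abs]
    _ ≤ ‖Complex.exp (-(t * (v 1 + v 2) : ℝ))‖ * (|v 1| * |v 2|) ^ (y + 1) *
          (C * ε ^ (y + 1) * (C * ε ^ (y + 1)) + C * ε ^ (y + 2) * (C * ε ^ y)) := by
        gcongr
        exact norm_mul_sub_mul_le (hC _) (hC _) (hC _) (hC _)
    _ = _ := by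
        simp only [mul_zpow, zpow_add₀ hε.ne', zpow_one, zpow_two]
        ring

variable (hv₁ : v 1 ≠ 0) (hv₂ : v 2 ≠ 0)
include hv₁ hv₂

lemma hasSum_P2_add_one_add (y : ℤ) :
    HasSum (fun n : ℕ => P2 v ε (-1) 0 y (y + 1 + n) t) (Q2 v ε y t - Q2 v ε (y + 1) t) := by
  have h₂₃ : HasSum (fun n : ℕ => (v 2 : ℂ) ^ n * F v ε 2 2 (y + 1 + n) t) (F v ε 2 3 (y + 1) t) :=
    hasSum_F_add_two_right t hε hvε 2 1 (y + 1)
  have h₁₃ : HasSum (fun n : ℕ => (v 2 : ℂ) ^ n * F v ε 1 2 (y + 2 + n) t) (F v ε 1 3 (y + 2) t) :=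
    hasSum_F_add_two_right t hε hvε 1 1 (y + 2)
  have hv₁' : (v 1 : ℂ) ≠ 0 := ofReal_ne_zero.2 hv₁
  have hv₂' : (v 2 : ℂ) ≠ 0 := ofReal_ne_zero.2 hv₂
  have hterm : (fun n : ℕ => P2 v ε (-1) 0 y (y + 1 + n) t) = fun n : ℕ =>
      Complex.exp (-(t * (v 1 + v 2) : ℝ)) * (v 1 : ℂ) ^ (y + 1) * (v 2 : ℂ) ^ (y + 1) *
        (F v ε 1 1 (y + 1) t * ((v 2 : ℂ) ^ n * F v ε 2 2 (y + 1 + n) t) -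
          (v 2 : ℂ) ^ n * F v ε 1 2 (y + 2 + n) t * F v ε 2 1 y t) := by
    funext n
    simp only [P2, Matrix.det_fin_two_of, sub_neg_eq_add, sub_zero, zpow_add₀ hv₂', zpow_natCast]
    ring_nf
  have hvalue : Q2 v ε y t - Q2 v ε (y + 1) t =
      Complex.exp (-(t * (v 1 + v 2) : ℝ)) * (v 1 : ℂ) ^ (y + 1) * (v 2 : ℂ) ^ (y + 1) *
        (F v ε 1 1 (y + 1) t * F v ε 2 3 (y + 1) t - F v ε 1 3 (y + 2) t * F v ε 2 1 y t) := by
    simp only [Q2, Matrix.det_fin_two_of, mul_zpow, zpow_add_one₀ hv₁', zpow_add_one₀ hv₂',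
      F_two_one t hε hvε, F_one_one t hε hvε, F_one_two t hε hvε, F_two_three t hε hvε]
    ring_nf
  rw [hterm, hvalue]
  exact ((h₂₃.mul_left _).sub (h₁₃.mul_right _)).mul_left _

lemma summable_P2 (x : ℤ) :
    Summable fun p : ℕ × ℕ => P2 v ε (-1) 0 (x + p.1) (x + p.1 + 1 + p.2) t := by
  obtain ⟨K, hK⟩ := exists_norm_P2_le t hε hvε
  have hq₁ : 0 < |v 1| * ε := by positivity
  have hq₂ : 0 < |v 2| * ε := by positivity
  refine .of_norm_bounded (((summable_geometric_of_lt_one (by positivity)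
      (mul_lt_one_of_nonneg_of_lt_one_left hq₁.le (hvε 1) (hvε 2).le)).mul_of_nonneg
      (summable_geometric_of_lt_one hq₂.le (hvε 2)) (fun _ => by positivity)
      (fun _ => by positivity)).mul_left (K * (|v 1| * ε) ^ (x + 1) * (|v 2| * ε) ^ (x + 1)))
    fun p => (hK _ _).trans_eq ?_
  rw [show x + p.1 + 1 = x + 1 + (p.1 : ℤ) by ring,
    show x + 1 + (p.1 : ℤ) + p.2 = x + 1 + ((p.1 + p.2 : ℕ) : ℤ) by push_cast; ring,
    zpow_add₀ hq₁.ne', zpow_add₀ hq₂.ne', zpow_natCast, zpow_natCast]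
  ring

lemma tendsto_Q2 (x : ℤ) : Tendsto (fun m : ℕ => Q2 v ε (x + m) t) atTop (𝓝 0) := by
  obtain ⟨K, hK⟩ := exists_norm_Q2_le t hε hvε
  have hq : 0 < |v 1| * ε * (|v 2| * ε) := by positivity
  have hq₁ : |v 1| * ε * (|v 2| * ε) < 1 :=
    mul_lt_one_of_nonneg_of_lt_one_left (by positivity) (hvε 1) (hvε 2).le
  have hgeom := (tendsto_pow_atTop_nhds_zero_of_lt_one hq.le hq₁).const_mul
    (K * (|v 1| * ε * (|v 2| * ε)) ^ (x + 1))
  rw [mul_zero] at hgeom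
  refine squeeze_zero_norm (fun m => (hK _).trans_eq ?_) hgeom
  rw [show x + m + 1 = x + 1 + (m : ℤ) by ring, zpow_add₀ hq.ne', zpow_natCast]
  ring

lemma hasSum_P2 (x : ℤ) :
    HasSum (fun p : ℕ × ℕ => P2 v ε (-1) 0 (x + p.1) (x + p.1 + 1 + p.2) t) (Q2 v ε x t) := by
  simpa using hasSum_of_fiberwise_telescoping (g := fun m : ℕ => Q2 v ε (x + m) t)
    (summable_P2 t hε hvε hv₁ hv₂ x)
    (fun m => by simpa [add_assoc] using hasSum_P2_add_one_add t hε hvε hv₁ hv₂ (x + m))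
    (tendsto_Q2 t hε hvε hv₁ hv₂ x)

end TwoParticles

def increasingPairsEquiv (x : ℤ) : ℕ × ℕ ≃ {p : ℤ × ℤ // x ≤ p.1 ∧ x + 1 ≤ p.2 ∧ p.1 < p.2} where
  toFun q := ⟨(x + q.1, x + q.1 + 1 + q.2), by omega⟩
  invFun p := ((p.1.1 - x).toNat, (p.1.2 - p.1.1 - 1).toNat)
  left_inv q := by ext <;> simp; omega
  right_inv p := by ext <;> simp <;> omega

theorem two_particle_current_distribution_general
    (v : ℕ → ℝ) (vmax : ℝ) (hv : ∀ i, 0 < v i) (hvm : ∀ i, v i ≤ vmax)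
    (ε : ℝ) (hε : 0 < ε) (hεm : ε < 1 / vmax)
    (x : ℤ) (t : ℝ) :
    HasSum
      (fun p : {p : ℤ × ℤ // x ≤ p.1 ∧ x + 1 ≤ p.2 ∧ p.1 < p.2} =>
        P2 v ε (-1) 0 p.1.1 p.1.2 t)
      (Complex.exp (-(t * (v 1 + v 2) : ℝ)) * ((v 1 : ℂ) * (v 2 : ℂ)) ^ (x + 1) *
        Matrix.det !![F v ε 1 2 (x + 1) t, F v ε 1 3 (x + 2) t;
                      F v ε 2 2 x t, F v ε 2 3 (x + 1) t]) ∧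
    Complex.exp (-(t * (v 1 + v 2) : ℝ)) * ((v 1 : ℂ) * (v 2 : ℂ)) ^ (x + 1) *
        Matrix.det !![F v ε 1 2 (x + 1) t, F v ε 1 3 (x + 2) t;
                      F v ε 2 2 x t, F v ε 2 3 (x + 1) t] =
      Complex.exp (-(t * (v 1 + v 2) : ℝ)) * ((v 1 : ℂ) * (v 2 : ℂ)) ^ (x + 1) *
        Matrix.det !![F v ε 1 3 (x + 1) t, F v ε 1 3 (x + 2) t;
                      F v ε 1 3 x t, F v ε 1 3 (x + 1) t] := by
  have hvmax : 0 < vmax := (hv 1).trans_le (hvm 1)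
  have hvε : ∀ i, |v i| * ε < 1 := fun i => by
    rw [abs_of_pos (hv i)]
    calc v i * ε ≤ vmax * ε := by gcongr; exact hvm i
      _ < 1 := by rwa [lt_div_iff₀ hvmax, mul_comm] at hεm
  rw [det_F_eq_det_F_one_three t hε hvε]
  exact ⟨(Equiv.hasSum_iff (increasingPairsEquiv x)).1
    (hasSum_P2 t hε hvε (hv 1).ne' (hv 2).ne' x), rfl⟩

theorem two_particle_current_distribution
    (v : ℕ → ℝ) (vmax : ℝ) (hv : ∀ i, 0 < v i) (hvm : ∀ i, v i ≤ vmax)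
    (ε : ℝ) (hε : 0 < ε) (hεm : ε < 1 / vmax)
    (x : ℤ) (t : ℝ) (ht : 0 ≤ t) :
    HasSum
      (fun p : {p : ℤ × ℤ // x ≤ p.1 ∧ x + 1 ≤ p.2 ∧ p.1 < p.2} =>
        P2 v ε (-1) 0 p.1.1 p.1.2 t)
      (Complex.exp (-(t * (v 1 + v 2) : ℝ)) * ((v 1 : ℂ) * (v 2 : ℂ)) ^ (x + 1) *
        Matrix.det !![F v ε 1 2 (x + 1) t, F v ε 1 3 (x + 2) t;
                      F v ε 2 2 x t, F v ε 2 3 (x + 1) t]) ∧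
    Complex.exp (-(t * (v 1 + v 2) : ℝ)) * ((v 1 : ℂ) * (v 2 : ℂ)) ^ (x + 1) *
        Matrix.det !![F v ε 1 2 (x + 1) t, F v ε 1 3 (x + 2) t;
                      F v ε 2 2 x t, F v ε 2 3 (x + 1) t] =
      Complex.exp (-(t * (v 1 + v 2) : ℝ)) * ((v 1 : ℂ) * (v 2 : ℂ)) ^ (x + 1) *
        Matrix.det !![F v ε 1 3 (x + 1) t, F v ε 1 3 (x + 2) t;
                      F v ε 1 3 x t, F v ε 1 3 (x + 1) t] :=
  two_particle_current_distribution_general v vmax hv hvm ε hε hεm x t
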